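/- arXiv:math/0005045 — 5 statements merged into one kernel-verified Lean document; each statement's English description precedes it below -/
import Mathlib

section
/- For every polynomial P ∈ K⟨n⟩, the n-tuple of partial cyclic derivatives satisfies Σ_{j=1}^n [X_j, δ_j P] = 0, where [a,b] = ab − ba denotes the commutator. -/
/-! Setup: the free associative algebra `K⟨X_1,…,X_n⟩` realized as the monoid
algebra of the free monoid on `Fin n`, together with the partial cyclic
derivatives `δ_j`, the number operator `N` and the cyclic symmetrization `C`. -/

noncomputable section

/-- `K⟨n⟩`, the ring of polynomials in `n` noncommuting indeterminates. -/
abbrev FreePoly (K : Type) [CommSemiring K] (n : ℕ) : Type :=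
  MonoidAlgebra K (FreeMonoid (Fin n))

/-- The monomial `X_{i_1} ⋯ X_{i_p}` associated to the word `w = [i_1,…,i_p]`. -/
def mono (K : Type) [Field K] {n : ℕ} (w : List (Fin n)) : FreePoly K n :=
  MonoidAlgebra.single (FreeMonoid.ofList w) 1

/-- The indeterminate `X k`. -/
def Xvar (K : Type) [Field K] {n : ℕ} (k : Fin n) : FreePoly K n := mono K [k]

variable {K : Type} [Field K] [CharZero K] {n : ℕ}

/-- The partial cyclic derivative `δ_j = μ̃ ∘ ∂_j`: on a monomial
`X_{i_0} ⋯ X_{i_s}` it gives `∑_{p : i_p = j} X_{i_{p+1}} ⋯ X_{i_s} X_{i_0} ⋯ X_{i_{p-1}}`. -/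
def cycDeriv (j : Fin n) : FreePoly K n →ₗ[K] FreePoly K n :=
  (Finsupp.lsum K fun w => LinearMap.toSpanSingleton K _
    (∑ p : Fin (FreeMonoid.toList w).length,
      if (FreeMonoid.toList w).get p = j then
        mono K ((FreeMonoid.toList w).drop (p + 1) ++ (FreeMonoid.toList w).take p)
      else 0)) ∘ₗ (MonoidAlgebra.coeffLinearEquiv K).toLinearMap

/-- The number operator `N`, multiplying a monomial by its degree. -/
def numOp : FreePoly K n →ₗ[K] FreePoly K n :=
  (Finsupp.lsum K fun w => LinearMap.toSpanSingleton K _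
    ((FreeMonoid.toList w).length • mono K (FreeMonoid.toList w))) ∘ₗ
    (MonoidAlgebra.coeffLinearEquiv K).toLinearMap

/-- The cyclic symmetrization `C`, sending a monomial of degree `p ≥ 1` to the
sum of its `p` cyclic rotations (and `1` to `0`). -/
def cycSym : FreePoly K n →ₗ[K] FreePoly K n :=
  (Finsupp.lsum K fun w => LinearMap.toSpanSingleton K _
    (∑ p ∈ Finset.range (FreeMonoid.toList w).length,
      mono K ((FreeMonoid.toList w).rotate (p + 1)))) ∘ₗ
    (MonoidAlgebra.coeffLinearEquiv K).toLinearMap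

/-! On a monomial `w`, the terms of `∑ⱼ [X_j, δ_j w]` are indexed by the positions `p` of `w`,
and the one at `p` is `rot_p w - rot_{p+1} w`, where `rot_p` moves the first `p` letters to the
end. The sum telescopes to `w - rot_{|w|} w = 0`, and the general case follows by linearity. -/

section Monomials

omit [CharZero K]

lemma mono_append (a b : List (Fin n)) : mono K (a ++ b) = mono K a * mono K b := by
  simp [mono, MonoidAlgebra.single_mul_single, ← FreeMonoid.ofList_append]

lemma cycDeriv_mono (j : Fin n) (w : List (Fin n)) :
    cycDeriv j (mono K w) =
      ∑ p : Fin w.length, if w[p] = j then mono K (w.drop (p + 1) ++ w.take p) else 0 := by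
  simp [cycDeriv, mono]
  rfl

lemma Xvar_mul_mono_drop_append_take {w : List (Fin n)} {p : ℕ} (hp : p < w.length) :
    Xvar K w[p] * mono K (w.drop (p + 1) ++ w.take p) = mono K (w.rotate p) := by
  rw [Xvar, ← mono_append, List.rotate_eq_drop_append_take hp.le, ← List.getElem_cons_drop hp,
    List.singleton_append, List.cons_append]

lemma mono_drop_append_take_mul_Xvar {w : List (Fin n)} {p : ℕ} (hp : p < w.length) :
    mono K (w.drop (p + 1) ++ w.take p) * Xvar K w[p] = mono K (w.rotate (p + 1)) := by
  rw [Xvar, ← mono_append, List.rotate_eq_drop_append_take hp, List.take_add_one,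
    List.getElem?_eq_getElem hp, Option.toList_some, List.append_assoc]

theorem sum_commutator_cycDeriv_mono (w : List (Fin n)) :
    ∑ j : Fin n, (Xvar K j * cycDeriv j (mono K w) - cycDeriv j (mono K w) * Xvar K j) = 0 := by
  calc
    _ = ∑ p : Fin w.length, (Xvar K w[(p : ℕ)] * mono K (w.drop (p + 1) ++ w.take p)
          - mono K (w.drop (p + 1) ++ w.take p) * Xvar K w[(p : ℕ)]) := by
      simp only [cycDeriv_mono, Finset.mul_sum, Finset.sum_mul, mul_ite, ite_mul, mul_zero,
        zero_mul, ← Finset.sum_sub_distrib]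
      rw [Finset.sum_comm]
      refine Finset.sum_congr rfl fun p _ => ?_
      rw [Finset.sum_sub_distrib, Finset.sum_ite_eq, Finset.sum_ite_eq]
      simp
    _ = ∑ p ∈ Finset.range w.length, (mono K (w.rotate p) - mono K (w.rotate (p + 1))) := by
      rw [← Fin.sum_univ_eq_sum_range (fun p => mono K (w.rotate p) - mono K (w.rotate (p + 1)))]
      refine Finset.sum_congr rfl fun p _ => ?_
      rw [Xvar_mul_mono_drop_append_take p.2, mono_drop_append_take_mul_Xvar p.2]
    _ = 0 := by
      rw [Finset.sum_range_sub', List.rotate_zero, List.rotate_length, sub_self]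

end Monomials

theorem sum_commutator_cycDeriv_eq_zero (P : FreePoly K n) :
    ∑ j : Fin n, (Xvar K j * cycDeriv j P - cycDeriv j P * Xvar K j) = 0 := by
  let commutatorSum : FreePoly K n →ₗ[K] FreePoly K n :=
    ∑ j : Fin n, (LinearMap.mulLeft K (Xvar K j) - LinearMap.mulRight K (Xvar K j)) ∘ₗ cycDeriv j
  have : commutatorSum = 0 := MonoidAlgebra.lhom_ext' fun w => LinearMap.ext_ring <| by
    simpa [commutatorSum, mono] using sum_commutator_cycDeriv_mono (K := K) w.toList
  simpa [commutatorSum] using congr($this P)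
end
end

section
/- Let P_1,…,P_n ∈ K⟨n⟩. If Σ_{j=1}^n [X_j, P_j] = 0, then Σ_{j=1}^n X_j P_j lies in the cyclic subspace CK⟨n⟩. -/
/-! Setup: the free associative algebra `K⟨X_1,…,X_n⟩` realized as the monoid
algebra of the free monoid on `Fin n`, together with the partial cyclic
derivatives `δ_j`, the number operator `N` and the cyclic symmetrization `C`. -/

noncomputable section

variable {K : Type} [Field K] [CharZero K] {n : ℕ}

/-! Comparing coefficients, `∑ j, X_j * P_j` has the coefficient `(P_i)_v` at the word `i v`,
while `∑ j, P_j * X_j` has it at `v i`. So the hypothesis says that the coefficients of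
`F = ∑ j, X_j * P_j` are invariant under rotation of words, and `F` has no constant term.
On rotation-invariant polynomials the cyclic symmetrization `C` acts as the number operator `N`,
hence `F = C (N⁻¹ F)`. -/

open FreeMonoid Finset
open MonoidAlgebra hiding of

section FreeMonoidAlgebra

variable {R α : Type*} [Semiring R]

def IsRotationInvariant (x : MonoidAlgebra R (FreeMonoid α)) : Prop :=
  ∀ i w, x.coeff (of i * w) = x.coeff (w * of i)

lemma IsRotationInvariant.coeff_ofList_rotate {x : MonoidAlgebra R (FreeMonoid α)}
    (hx : IsRotationInvariant x) (l : List α) (k : ℕ) :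
    x.coeff (ofList (l.rotate k)) = x.coeff (ofList l) := by
  induction k with
  | zero => rw [List.rotate_zero]
  | succ k ih =>
    rw [← ih, ← List.rotate_rotate]
    cases l.rotate k with
    | nil => rfl
    | cons a t => rw [List.rotate_cons_succ, List.rotate_zero, ofList_cons, ofList_append,
        ofList_singleton, hx]

variable [DecidableEq α]

lemma coeff_single_of_mul_of_mul (x : MonoidAlgebra R (FreeMonoid α)) (r : R) (j i : α)
    (w : FreeMonoid α) :
    (single (of j) r * x).coeff (of i * w) = if j = i then r * x.coeff w else 0 := by
  split_ifs with hji
  · rw [hji, coeff_single_mul_mul]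
  · refine coeff_single_mul_of_forall_mul_ne _ _ fun d hd => hji ?_
    simpa using congr_arg (fun v => (toList v).head?) hd

lemma coeff_mul_single_of_mul_of (x : MonoidAlgebra R (FreeMonoid α)) (r : R) (j i : α)
    (w : FreeMonoid α) :
    (x * single (of j) r).coeff (w * of i) = if j = i then x.coeff w * r else 0 := by
  split_ifs with hji
  · rw [hji, coeff_mul_single_mul]
  · refine coeff_mul_single_of_forall_mul_ne _ _ fun d hd => hji ?_
    simpa using congr_arg (fun v => (toList v).getLast?) hd

variable [Fintype α]

lemma isRotationInvariant_sum_single_of_mul (P : α → MonoidAlgebra R (FreeMonoid α))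
    (h : ∑ j, single (of j) 1 * P j = ∑ j, P j * single (of j) 1) :
    IsRotationInvariant (∑ j, single (of j) 1 * P j) := by
  intro i w
  calc (∑ j, single (of j) 1 * P j).coeff (of i * w)
      = (P i).coeff w := by simp [coeff_sum, coeff_single_of_mul_of_mul]
    _ = (∑ j, P j * single (of j) 1).coeff (w * of i) := by
        simp [coeff_sum, coeff_mul_single_of_mul_of]
    _ = (∑ j, single (of j) 1 * P j).coeff (w * of i) := by rw [h]

end FreeMonoidAlgebra

lemma cycSym_single {K : Type} [Field K] (v : List (Fin n)) (c : K) :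
    cycSym (single (ofList v) c) = c • ∑ p ∈ range v.length, mono K (v.rotate (p + 1)) := by
  simp [cycSym]

/- `u.rotate (u.length - (p + 1) % u.length)` is the unique word whose rotation by `p + 1`
is `u` (`List.rotate_eq_iff`). -/
lemma coeff_cycSym {K : Type} [Field K] (G : FreePoly K n) (u : List (Fin n)) :
    (cycSym G).coeff (ofList u) =
      ∑ p ∈ range u.length, G.coeff (ofList (u.rotate (u.length - (p + 1) % u.length))) := by
  classical
  induction G using MonoidAlgebra.induction_linear with
  | zero => simp
  | add x y hx hy => simp [hx, hy, sum_add_distrib]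
  | single w c =>
    obtain ⟨v, rfl⟩ := FreeMonoid.ofList.surjective w
    by_cases hlen : v.length = u.length
    · simp [cycSym_single, mono, coeff_sum, Finsupp.single_apply, hlen, List.rotate_eq_iff,
        sum_ite, mul_comm]
    · have hne : ∀ k, v ≠ u.rotate k := fun k h => hlen (by simp [h])
      simp [cycSym_single, mono, coeff_sum, List.rotate_eq_iff, hne]

lemma coeff_cycSym_of_isRotationInvariant {K : Type} [Field K] {G : FreePoly K n}
    (hG : IsRotationInvariant G) (u : List (Fin n)) :
    (cycSym G).coeff (ofList u) = u.length * G.coeff (ofList u) := by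
  simp [coeff_cycSym, hG.coeff_ofList_rotate]

lemma mem_range_cycSym_of_isRotationInvariant {F : FreePoly K n} (hF : IsRotationInvariant F)
    (hF₁ : F.coeff 1 = 0) : F ∈ LinearMap.range (cycSym (K := K) (n := n)) := by
  set G : FreePoly K n := ofCoeff ((fun w : FreeMonoid (Fin n) => (w.length : K)⁻¹) • F.coeff)
  have hG : ∀ w, G.coeff w = (w.length : K)⁻¹ * F.coeff w := fun w => rfl
  have hG_rot : IsRotationInvariant G := fun i w => by
    rw [hG, hG, hF, length_mul, length_mul, add_comm]
  refine ⟨G, MonoidAlgebra.ext <| Finsupp.ext fun w => ?_⟩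
  obtain ⟨u, rfl⟩ := FreeMonoid.ofList.surjective w
  rw [coeff_cycSym_of_isRotationInvariant hG_rot, hG]
  rcases eq_or_ne u [] with rfl | hu
  · simp [ofList_nil, hF₁]
  · simp [FreeMonoid.length, hu]

theorem mem_cyclicSubspace_of_sum_commutator_eq_zero (P : Fin n → FreePoly K n)
    (h : ∑ j : Fin n, (Xvar K j * P j - P j * Xvar K j) = 0) :
    (∑ j : Fin n, Xvar K j * P j) ∈
      LinearMap.range (cycSym (K := K) (n := n)) := by
  rw [sum_sub_distrib, sub_eq_zero] at h
  refine mem_range_cycSym_of_isRotationInvariant (isRotationInvariant_sum_single_of_mul P h) ?_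
  simp [coeff_sum, Xvar, mono]
end
end

section
/- Let P_1,…,P_n ∈ K⟨n⟩. If Σ_{j=1}^n X_j P_j lies in the cyclic subspace CK⟨n⟩, then for every k with 1 ≤ k ≤ n one has δ_k(Σ_{j=1}^n X_j P_j) = (N + I) P_k, where I is the identity map of K⟨n⟩. -/
/-! Setup: the free associative algebra `K⟨X_1,…,X_n⟩` realized as the monoid
algebra of the free monoid on `Fin n`, together with the partial cyclic
derivatives `δ_j`, the number operator `N` and the cyclic symmetrization `C`. -/

noncomputable section

variable {K : Type} [Field K] [CharZero K] {n : ℕ}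

/-! Let `λ_k` be the left quotient by `X_k` (`X_k u ↦ u`, other monomials `↦ 0`), so that
`λ_k (∑ X_j P_j) = P_k`. For a word `w` of length `p`, `δ_k` takes the same value on all rotations
of `w`, hence `δ_k (C w) = p • δ_k w = p • λ_k (C w)`; and `λ_k (C w)` is homogeneous of degree
`p - 1`, hence `(N + I) (λ_k (C w)) = p • λ_k (C w)`. So `δ_k ∘ C = (N + I) ∘ λ_k ∘ C`, and it
remains to apply this to a preimage of `∑ X_j P_j` under `C`. -/

theorem Function.Periodic.sum_range_add {M : Type*} [AddCommMonoid M] {f : ℕ → M} {a : ℕ}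
    (hf : Function.Periodic f a) (c : ℕ) :
    ∑ q ∈ Finset.range a, f (q + c) = ∑ q ∈ Finset.range a, f q := by
  calc ∑ q ∈ Finset.range a, f (q + c)
      = ∑ m ∈ Finset.Ico c (c + a), f (m % a) := by
        rw [Finset.sum_Ico_eq_sum_range, Nat.add_sub_cancel_left]
        simp only [hf.map_mod_nat, add_comm]
    _ = ((Multiset.Ico c (c + a)).map (· % a) |>.map f).sum := by
        rw [Multiset.map_map]; rfl
    _ = ∑ q ∈ Finset.range a, f q := by
        rw [Nat.multiset_Ico_map_mod]; rfl

theorem List.periodic_rotate {α : Type*} (l : List α) : Function.Periodic l.rotate l.length :=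
  fun r => by rw [← List.rotate_mod, Nat.add_mod_right, List.rotate_mod]

section

variable {K : Type} [Field K] {n : ℕ}

/-- `cycDeriv`, `numOp` and `cycSym` are all definitionally of this form. -/
def wordLinear (v : FreeMonoid (Fin n) → FreePoly K n) : FreePoly K n →ₗ[K] FreePoly K n :=
  (Finsupp.lsum K fun w => LinearMap.toSpanSingleton K _ (v w)) ∘ₗ
    (MonoidAlgebra.coeffLinearEquiv K).toLinearMap

theorem wordLinear_mono (v : FreeMonoid (Fin n) → FreePoly K n) (u : List (Fin n)) :
    wordLinear v (mono K u) = v (FreeMonoid.ofList u) :=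
  (Finsupp.lsum_single K _ _ 1).trans (one_smul K _)

theorem single_eq_smul_mono (w : FreeMonoid (Fin n)) (c : K) :
    (MonoidAlgebra.single w c : FreePoly K n) = c • mono K (FreeMonoid.toList w) := by
  rw [mono, FreeMonoid.ofList_toList, MonoidAlgebra.smul_single, smul_eq_mul, mul_one]

theorem linearMap_ext_mono {f g : FreePoly K n →ₗ[K] FreePoly K n}
    (h : ∀ u, f (mono K u) = g (mono K u)) : f = g :=
  MonoidAlgebra.lhom_ext' fun w => LinearMap.ext_ring <| by
    simpa [single_eq_smul_mono] using h (FreeMonoid.toList w)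

def leftQuotWord (k : Fin n) : List (Fin n) → FreePoly K n
  | [] => 0
  | a :: u => if a = k then mono K u else 0

def leftQuot (k : Fin n) : FreePoly K n →ₗ[K] FreePoly K n :=
  wordLinear fun w => leftQuotWord k (FreeMonoid.toList w)

theorem leftQuot_mono (k : Fin n) (u : List (Fin n)) :
    leftQuot k (mono K u) = leftQuotWord k u :=
  wordLinear_mono _ u

theorem Xvar_mul_mono (j : Fin n) (u : List (Fin n)) : Xvar K j * mono K u = mono K (j :: u) := by
  rw [Xvar, mono, mono, MonoidAlgebra.single_mul_single, one_mul]
  rfl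

theorem leftQuot_Xvar_mul (k j : Fin n) (Q : FreePoly K n) :
    leftQuot k (Xvar K j * Q) = if j = k then Q else 0 := by
  have hcomp : leftQuot k ∘ₗ LinearMap.mulLeft K (Xvar K j) = if j = k then LinearMap.id else 0 :=
    linearMap_ext_mono fun u => by
      split_ifs with h <;> simp [Xvar_mul_mono, leftQuot_mono, leftQuotWord, h]
  split_ifs at hcomp ⊢ <;> simpa using LinearMap.congr_fun hcomp Q

theorem leftQuot_sum_Xvar_mul (k : Fin n) (P : Fin n → FreePoly K n) :
    leftQuot k (∑ j, Xvar K j * P j) = P k := by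
  simp [map_sum, leftQuot_Xvar_mul]

theorem numOp_mono (u : List (Fin n)) : numOp (mono K u) = u.length • mono K u :=
  wordLinear_mono _ u

theorem numOp_leftQuotWord_add (k : Fin n) (u : List (Fin n)) :
    numOp (leftQuotWord (K := K) k u) + leftQuotWord k u = u.length • leftQuotWord k u := by
  cases u with
  | nil => simp [leftQuotWord]
  | cons a u =>
    by_cases h : a = k
    · simp [leftQuotWord, h, numOp_mono, add_smul]
    · simp [leftQuotWord, h]

theorem cycSym_mono (w : List (Fin n)) :
    cycSym (mono K w) = ∑ r ∈ Finset.range w.length, mono K (w.rotate r) :=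
  (wordLinear_mono _ w).trans (((List.periodic_rotate w).comp (mono K)).sum_range_add 1)

theorem cycDeriv_mono_s3 (k : Fin n) (u : List (Fin n)) :
    cycDeriv k (mono K u) = ∑ r ∈ Finset.range u.length, leftQuotWord k (u.rotate r) := by
  rw [← Fin.sum_univ_eq_sum_range (fun r => leftQuotWord k (u.rotate r))]
  refine (wordLinear_mono _ u).trans (Finset.sum_congr rfl fun r _ => ?_)
  have hr : (r : ℕ) < u.length := r.isLt
  rw [List.rotate_eq_drop_append_take hr.le, List.drop_eq_getElem_cons hr, List.cons_append]
  simp only [leftQuotWord]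
  rfl

theorem cycDeriv_mono_rotate (k : Fin n) (u : List (Fin n)) (m : ℕ) :
    cycDeriv k (mono K (u.rotate m)) = cycDeriv k (mono K u) := by
  simp only [cycDeriv_mono_s3, List.length_rotate, List.rotate_rotate, add_comm m]
  exact ((List.periodic_rotate u).comp (leftQuotWord (K := K) k)).sum_range_add m

theorem cycDeriv_cycSym_mono (k : Fin n) (w : List (Fin n)) :
    cycDeriv k (cycSym (mono K w)) = w.length • leftQuot k (cycSym (mono K w)) := by
  calc cycDeriv k (cycSym (mono K w))
      = ∑ _r ∈ Finset.range w.length, cycDeriv k (mono K w) := by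
        simp only [cycSym_mono, map_sum, cycDeriv_mono_rotate]
    _ = w.length • leftQuot k (cycSym (mono K w)) := by
        simp only [Finset.sum_const, Finset.card_range, cycDeriv_mono_s3, cycSym_mono, map_sum,
          leftQuot_mono]

theorem numOp_leftQuot_cycSym_mono_add (k : Fin n) (w : List (Fin n)) :
    numOp (leftQuot k (cycSym (mono K w))) + leftQuot k (cycSym (mono K w)) =
      w.length • leftQuot k (cycSym (mono K w)) := by
  simp only [cycSym_mono, map_sum, leftQuot_mono, ← Finset.sum_add_distrib, numOp_leftQuotWord_add,
    List.length_rotate, Finset.smul_sum]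

theorem cycDeriv_comp_cycSym (k : Fin n) :
    cycDeriv k ∘ₗ cycSym = (numOp + LinearMap.id) ∘ₗ leftQuot k ∘ₗ cycSym (K := K) (n := n) :=
  linearMap_ext_mono fun w => by
    simp [cycDeriv_cycSym_mono, numOp_leftQuot_cycSym_mono_add]

end

theorem cycDeriv_eq_numOp_add_of_mem_cyclicSubspace (P : Fin n → FreePoly K n)
    (h : (∑ j : Fin n, Xvar K j * P j) ∈ LinearMap.range (cycSym (K := K) (n := n))) :
    ∀ k : Fin n, cycDeriv k (∑ j : Fin n, Xvar K j * P j) = numOp (P k) + P k := by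
  intro k
  obtain ⟨G, hG⟩ := h
  have hP : leftQuot k (cycSym G) = P k := by rw [hG, leftQuot_sum_Xvar_mul]
  have hcomp := LinearMap.congr_fun (cycDeriv_comp_cycSym k) G
  simp only [LinearMap.comp_apply, LinearMap.add_apply, LinearMap.id_apply, hP] at hcomp
  rw [← hG, hcomp]
end
end

section
/- The sequence K⟨n⟩ →(δ) (K⟨n⟩)^n →(θ) K⟨n⟩ is exact at (K⟨n⟩)^n, where δ(P) = (δ_1 P, …, δ_n P) and θ((P_j)_{1≤j≤n}) = Σ_{j=1}^n [X_j, P_j]: the image of the cyclic gradient map δ equals the kernel of θ. -/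
/-! Setup: the free associative algebra `K⟨X_1,…,X_n⟩` realized as the monoid
algebra of the free monoid on `Fin n`, together with the partial cyclic
derivatives `δ_j`, the number operator `N` and the cyclic symmetrization `C`. -/

noncomputable section

variable {K : Type} [Field K] [CharZero K] {n : ℕ}

/-!
Encode a tuple `(P_j)` by the function `tupleCoeff P` on words sending `a v` to the coefficient
of `v` in `P_a`, i.e. by the coefficients of `∑ X_j P_j`. The coefficient of `∑ P_j X_j` at the
rotated word `v a` is the same number, so `θ(P) = 0` says exactly that this function is invariant
under cyclic rotation of words. The tuple `δP` is encoded by the cyclic sum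
`u ↦ ∑_p P_{rot^p u}`, which is rotation invariant. Conversely, a rotation-invariant `d` vanishing
on the empty word is the cyclic sum of `u ↦ d(u) / |u|` (this is where characteristic zero
enters), so `P = N⁻¹(∑ X_j P_j)` satisfies `δP = (P_j)`.
-/

open Finset FreeMonoid

section Rotation

variable {α : Type*}

theorem List.sum_range_length_rotate_succ {M : Type*} [AddCommMonoid M] (l : List α)
    (f : List α → M) :
    ∑ p ∈ Finset.range l.length, f (l.rotate (p + 1)) =
      ∑ p ∈ Finset.range l.length, f (l.rotate p) := by
  rcases h : l.length with _ | m
  · rfl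
  · rw [Finset.sum_range_succ, Finset.sum_range_succ' (fun p => f (l.rotate p)), ← h,
      List.rotate_length, List.rotate_zero]

theorem List.rotate_eq_iff_rotate_sub {l l' : List α} (hl : l'.length = l.length) {p : ℕ}
    (hp : p ≤ l.length) : l.rotate p = l' ↔ l'.rotate (l.length - p) = l := by
  constructor
  · rintro rfl
    rw [List.rotate_rotate, Nat.add_sub_cancel' hp, List.rotate_length]
  · intro h
    rw [← h, List.rotate_rotate, Nat.sub_add_cancel hp, ← hl, List.rotate_length]

theorem List.card_rotate_eq_comm [DecidableEq α] (l l' : List α) :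
    #{p ∈ Finset.range l.length | l.rotate p = l'} =
      #{p ∈ Finset.range l'.length | l'.rotate p = l} := by
  by_cases hl : l'.length = l.length
  · simp only [card_filter]
    calc ∑ p ∈ Finset.range l.length, (if l.rotate p = l' then 1 else 0)
        = ∑ p ∈ Finset.range l.length, (if l'.rotate (l.length - p) = l then 1 else 0) :=
          sum_congr rfl fun p hp => by
            simp only [List.rotate_eq_iff_rotate_sub hl (mem_range.mp hp).le]
      _ = ∑ p ∈ Finset.range l.length,
            (if l'.rotate (l.length - (l.length - 1 - p)) = l then 1 else 0) :=
          (sum_range_reflect _ _).symm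
      _ = ∑ p ∈ Finset.range l.length, (if l'.rotate (p + 1) = l then 1 else 0) :=
          sum_congr rfl fun p hp => by rw [show l.length - (l.length - 1 - p) = p + 1 by grind]
      _ = ∑ p ∈ Finset.range l'.length, (if l'.rotate p = l then 1 else 0) := by
          rw [← hl]; exact l'.sum_range_length_rotate_succ fun u => if u = l then 1 else 0
  · have ne : ∀ {l₁ l₂ : List α} (p : ℕ), l₁.length ≠ l₂.length → l₁.rotate p ≠ l₂ :=
      fun p h h' => h (h' ▸ (List.length_rotate _ p).symm)
    rw [filter_false_of_mem fun p _ => ne p (Ne.symm hl),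
      filter_false_of_mem fun p _ => ne p hl]

theorem apply_rotate_eq_of_apply_rotate_one_eq {β : Type*} {d : List α → β}
    (hd : ∀ u, d (u.rotate 1) = d u) (u : List α) (p : ℕ) : d (u.rotate p) = d u := by
  induction p with
  | zero => rw [List.rotate_zero]
  | succ p ih => rw [← List.rotate_rotate, hd, ih]

theorem List.rotate_surjective (n : ℕ) :
    Function.Surjective fun l : List α => l.rotate n :=
  fun _ => ⟨_, List.rotate_eq_iff.mpr rfl⟩

theorem List.rotate_eq_cons_iff {l : List α} {p : ℕ} (hp : p < l.length) (a : α)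
    (v : List α) : l.rotate p = a :: v ↔ l[p] = a ∧ l.drop (p + 1) ++ l.take p = v := by
  rw [List.rotate_eq_drop_append_take hp.le, List.drop_eq_getElem_cons hp, List.cons_append,
    List.cons.injEq]

theorem sum_range_length_inv_mul_rotate {F : Type*} [DivisionRing F] [CharZero F]
    {d : List α → F} (hd_nil : d [] = 0) (hd : ∀ u, d (u.rotate 1) = d u) (u : List α) :
    ∑ p ∈ range u.length, (u.length : F)⁻¹ * d (u.rotate p) = d u := by
  simp only [apply_rotate_eq_of_apply_rotate_one_eq hd, sum_const, card_range, nsmul_eq_mul]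
  cases u with
  | nil => rw [hd_nil, mul_zero, mul_zero]
  | cons a v => exact mul_inv_cancel_left₀ (Nat.cast_ne_zero.mpr (List.cons_ne_nil a v ∘
      List.length_eq_zero_iff.mp)) _

end Rotation

theorem coeff_single_ofList {R α : Type*} [Semiring R] [DecidableEq α] (u v : List α) (c : R) :
    (MonoidAlgebra.single (ofList u) c).coeff (ofList v) = if u = v then c else 0 := by
  classical
  rw [MonoidAlgebra.coeff_single, Finsupp.single_apply]
  exact if_congr ofList.apply_eq_iff_eq rfl rfl

theorem MonoidAlgebra.exists_coeff_eq_mul_coeff {R M : Type*} [Semiring R] (g : M → R)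
    (x : MonoidAlgebra R M) : ∃ y : MonoidAlgebra R M, ∀ m, y.coeff m = g m * x.coeff m :=
  ⟨ofCoeff (Finsupp.ofSupportFinite _ (x.coeff.hasFiniteSupport.mul_right g)), fun _ => rfl⟩

section FreePoly

variable {K : Type} [Field K] {n : ℕ}

theorem coeff_Xvar_mul_ofList_nil (j : Fin n) (Q : FreePoly K n) :
    (Xvar K j * Q).coeff (ofList []) = 0 :=
  MonoidAlgebra.coeff_single_mul_of_forall_mul_ne _ _ fun _ h =>
    List.cons_ne_nil _ _ (congrArg FreeMonoid.toList h)

theorem coeff_Xvar_mul_ofList_cons (j a : Fin n) (v : List (Fin n)) (Q : FreePoly K n) :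
    (Xvar K j * Q).coeff (ofList (a :: v)) = if j = a then Q.coeff (ofList v) else 0 := by
  split_ifs with h
  · subst h
    rw [Xvar, mono, MonoidAlgebra.coeff_single_mul_eq_mul_coeff (ofList v), one_mul]
    exact fun _ _ => ⟨fun hm => congrArg ofList
      (List.cons_injective (congrArg FreeMonoid.toList hm)), fun hm => hm ▸ rfl⟩
  · exact MonoidAlgebra.coeff_single_mul_of_forall_mul_ne _ _ fun _ hm =>
      h (List.head_eq_of_cons_eq (congrArg FreeMonoid.toList hm))

theorem coeff_mul_Xvar_ofList_nil (j : Fin n) (Q : FreePoly K n) :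
    (Q * Xvar K j).coeff (ofList []) = 0 :=
  MonoidAlgebra.coeff_mul_single_of_forall_mul_ne _ _ fun _ h =>
    List.append_ne_nil_of_right_ne_nil _ (List.cons_ne_nil _ _) (congrArg FreeMonoid.toList h)

theorem coeff_mul_Xvar_ofList_concat (j b : Fin n) (v : List (Fin n)) (Q : FreePoly K n) :
    (Q * Xvar K j).coeff (ofList (v ++ [b])) = if j = b then Q.coeff (ofList v) else 0 := by
  split_ifs with h
  · subst h
    rw [Xvar, mono, MonoidAlgebra.coeff_mul_single_eq_coeff_mul (ofList v), mul_one]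
    exact fun _ _ => ⟨fun hm => congrArg ofList
      (List.append_cancel_right (congrArg FreeMonoid.toList hm)), fun hm => hm ▸ rfl⟩
  · exact MonoidAlgebra.coeff_mul_single_of_forall_mul_ne _ _ fun _ hm =>
      h (List.head_eq_of_cons_eq (List.append_inj' (congrArg FreeMonoid.toList hm) rfl).2)

def tupleCoeff (Ps : Fin n → FreePoly K n) : List (Fin n) → K
  | [] => 0
  | a :: v => (Ps a).coeff (ofList v)

theorem tupleCoeff_injective : Function.Injective (tupleCoeff (K := K) (n := n)) :=
  fun _ _ h => funext fun j => MonoidAlgebra.ext <| Finsupp.ext fun w =>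
    congrFun h (j :: w.toList)

theorem coeff_sum_Xvar_mul (Ps : Fin n → FreePoly K n) (u : List (Fin n)) :
    (∑ j, Xvar K j * Ps j).coeff (ofList u) = tupleCoeff Ps u := by
  rw [MonoidAlgebra.coeff_sum, Finset.sum_apply']
  cases u with
  | nil => simp only [coeff_Xvar_mul_ofList_nil, sum_const_zero, tupleCoeff]
  | cons a v => simp only [coeff_Xvar_mul_ofList_cons, sum_ite_eq', mem_univ, if_true, tupleCoeff]

theorem coeff_sum_mul_Xvar_rotate_one (Ps : Fin n → FreePoly K n) (u : List (Fin n)) :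
    (∑ j, Ps j * Xvar K j).coeff (ofList (u.rotate 1)) = tupleCoeff Ps u := by
  rw [MonoidAlgebra.coeff_sum, Finset.sum_apply']
  cases u with
  | nil => simp only [List.rotate_nil, coeff_mul_Xvar_ofList_nil, sum_const_zero, tupleCoeff]
  | cons a v =>
    simp only [List.rotate_cons_succ, List.rotate_zero, coeff_mul_Xvar_ofList_concat, sum_ite_eq',
      mem_univ, if_true, tupleCoeff]

theorem sum_commutator_eq_zero_iff (Ps : Fin n → FreePoly K n) :
    ∑ j, (Xvar K j * Ps j - Ps j * Xvar K j) = 0 ↔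
      ∀ u, tupleCoeff Ps (u.rotate 1) = tupleCoeff Ps u := by
  rw [sum_sub_distrib, sub_eq_zero, ← MonoidAlgebra.coeff_inj, Finsupp.ext_iff,
    ofList.surjective.forall, (List.rotate_surjective 1).forall]
  simp only [coeff_sum_Xvar_mul, coeff_sum_mul_Xvar_rotate_one]

theorem coeff_cycDeriv_single (k : Fin n) (u v : List (Fin n)) (c : K) :
    (cycDeriv k (MonoidAlgebra.single (ofList u) c)).coeff (ofList v) =
      #{p ∈ range u.length | u.rotate p = k :: v} * c := by
  rw [cycDeriv, LinearMap.comp_apply, LinearEquiv.coe_coe, MonoidAlgebra.coeffLinearEquiv_apply,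
    MonoidAlgebra.coeff_single, Finsupp.lsum_single, LinearMap.toSpanSingleton_apply,
    MonoidAlgebra.coeff_smul_apply, MonoidAlgebra.coeff_sum, Finset.sum_apply', smul_eq_mul,
    mul_comm, toList_ofList]
  congr 1
  have hterm : ∀ p : Fin u.length,
      (if u.get p = k then mono K (u.drop (p + 1) ++ u.take p) else 0).coeff (ofList v) =
        if u.rotate p = k :: v then (1 : K) else 0 := fun p => by
    rw [apply_ite (MonoidAlgebra.coeff · (ofList v)), mono, coeff_single_ofList,
      MonoidAlgebra.coeff_zero, Finsupp.coe_zero, Pi.zero_apply]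
    simp only [List.rotate_eq_cons_iff p.isLt, ite_and, List.get_eq_getElem]
  rw [sum_congr rfl fun p _ => hterm p,
    Fin.sum_univ_eq_sum_range (fun p => if u.rotate p = k :: v then (1 : K) else 0), sum_boole]

theorem coeff_cycDeriv (k : Fin n) (Q : FreePoly K n) (v : List (Fin n)) :
    (cycDeriv k Q).coeff (ofList v) =
      ∑ p ∈ range (v.length + 1), Q.coeff (ofList ((k :: v).rotate p)) := by
  induction Q using MonoidAlgebra.induction_linear with
  | zero =>
    simp only [map_zero, MonoidAlgebra.coeff_zero, Finsupp.coe_zero, Pi.zero_apply, sum_const_zero]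
  | add P Q hP hQ =>
    simp only [map_add, MonoidAlgebra.coeff_add, Finsupp.add_apply, hP, hQ, sum_add_distrib]
  | single w c =>
    obtain ⟨u, rfl⟩ := ofList.surjective w
    simp only [coeff_cycDeriv_single, coeff_single_ofList, Finset.sum_ite, sum_const_zero, add_zero,
      sum_const, nsmul_eq_mul]
    rw [List.card_rotate_eq_comm, filter_congr fun _ _ => eq_comm]
    rfl

theorem tupleCoeff_cycDeriv (P : FreePoly K n) (u : List (Fin n)) :
    tupleCoeff (fun k => cycDeriv k P) u =
      ∑ p ∈ range u.length, P.coeff (ofList (u.rotate p)) := by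
  cases u with
  | nil => rfl
  | cons k v => exact coeff_cycDeriv k P v

theorem sum_commutator_cycDeriv (P : FreePoly K n) :
    ∑ j, (Xvar K j * cycDeriv j P - cycDeriv j P * Xvar K j) = 0 := by
  rw [sum_commutator_eq_zero_iff]
  intro u
  simp only [tupleCoeff_cycDeriv, List.length_rotate, List.rotate_rotate, add_comm 1]
  exact u.sum_range_length_rotate_succ fun w => P.coeff (ofList w)

theorem exists_cycDeriv_eq_of_sum_commutator_eq_zero [CharZero K] (Ps : Fin n → FreePoly K n)
    (h : ∑ j, (Xvar K j * Ps j - Ps j * Xvar K j) = 0) : ∃ P, ∀ k, cycDeriv k P = Ps k := by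
  rw [sum_commutator_eq_zero_iff] at h
  obtain ⟨P, hP⟩ := MonoidAlgebra.exists_coeff_eq_mul_coeff (fun w => (w.length : K)⁻¹)
    (∑ j, Xvar K j * Ps j)
  refine ⟨P, congrFun (tupleCoeff_injective (funext fun u => ?_))⟩
  simp only [tupleCoeff_cycDeriv, hP, coeff_sum_Xvar_mul, FreeMonoid.length, toList_ofList,
    List.length_rotate]
  exact sum_range_length_inv_mul_rotate rfl h u

end FreePoly

theorem range_cycGradient_eq_ker_theta :
    {Ps : Fin n → FreePoly K n | ∃ P : FreePoly K n, ∀ j : Fin n, cycDeriv j P = Ps j} =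
      {Ps : Fin n → FreePoly K n |
        ∑ j : Fin n, (Xvar K j * Ps j - Ps j * Xvar K j) = 0} := by
  ext Ps
  constructor
  · rintro ⟨P, hP⟩
    obtain rfl : (fun j => cycDeriv j P) = Ps := funext hP
    exact sum_commutator_cycDeriv P
  · exact exists_cycDeriv_eq_of_sum_commutator_eq_zero Ps
end
end

section
/- Let P_1,…,P_n ∈ K⟨n⟩ be homogeneous of common degree s ≥ 1, and for each j write P_j = Σ c^j_{i_1…i_s} X_{i_1}⋯X_{i_s}. If Σ_{j=1}^n [X_j, P_j] = 0, then the coefficients satisfy the cyclic relation c^{i_0}_{i_1…i_s} = c^{i_s}_{i_0…i_{s-1}} for all multi-indices (i_0, i_1, …, i_s). -/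
/-! Setup: the free associative algebra `K⟨X_1,…,X_n⟩` realized as the monoid
algebra of the free monoid on `Fin n`, together with the partial cyclic
derivatives `δ_j`, the number operator `N` and the cyclic symmetrization `C`. -/

noncomputable section

variable {K : Type} [Field K] [CharZero K] {n : ℕ}

namespace FreeMonoid
variable {α : Type*}

theorem eq_of_of_mul_eq_of_mul {a b : α} {u v : FreeMonoid α} (h : of a * u = of b * v) :
    a = b :=
  (List.cons.inj (congrArg toList h)).1

theorem eq_of_mul_of_eq_mul_of {a b : α} {u v : FreeMonoid α} (h : u * of a = v * of b) :
    a = b :=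
  List.singleton_injective (List.append_inj' (congrArg toList h) rfl).2

theorem of_mul_ofList_eq_ofList_dropLast_mul_of_getLast (a : α) (l : List α) :
    of a * ofList l = ofList (a :: l).dropLast * of ((a :: l).getLast (List.cons_ne_nil a l)) :=
  congrArg ofList (List.dropLast_append_getLast _).symm

end FreeMonoid

namespace MonoidAlgebra

section Semiring
variable {R α : Type*} [Semiring R] [DecidableEq α]

theorem coeff_single_of_mul_of_mul (x : R[FreeMonoid α]) (r : R) (a b : α)
    (w : FreeMonoid α) :
    (single (FreeMonoid.of a) r * x).coeff (FreeMonoid.of b * w) =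
      if a = b then r * x.coeff w else 0 := by
  split_ifs with hab
  · rw [hab, coeff_single_mul_mul]
  · exact coeff_single_mul_of_forall_mul_ne _ _ fun _ h ↦
      hab (FreeMonoid.eq_of_of_mul_eq_of_mul h)

theorem coeff_mul_single_of_mul_of (x : R[FreeMonoid α]) (r : R) (a b : α)
    (w : FreeMonoid α) :
    (x * single (FreeMonoid.of a) r).coeff (w * FreeMonoid.of b) =
      if a = b then x.coeff w * r else 0 := by
  split_ifs with hab
  · rw [hab, coeff_mul_single_mul]
  · exact coeff_mul_single_of_forall_mul_ne _ _ fun _ h ↦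
      hab (FreeMonoid.eq_of_mul_of_eq_mul_of h)

end Semiring

theorem coeff_sum_commutator_of_eq {R α : Type*} [Ring R] [Fintype α]
    (P : α → R[FreeMonoid α]) {a b : α} {u v : FreeMonoid α}
    (huv : FreeMonoid.of a * u = v * FreeMonoid.of b) :
    (∑ j, (single (FreeMonoid.of j) 1 * P j - P j * single (FreeMonoid.of j) 1)).coeff
        (FreeMonoid.of a * u) =
      (P a).coeff u - (P b).coeff v := by
  classical
  rw [coeff_sum, Finset.sum_apply']
  simp only [coeff_sub, Finsupp.sub_apply, coeff_single_of_mul_of_mul]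
  rw [huv]
  simp only [coeff_mul_single_of_mul_of, one_mul, mul_one, Finset.sum_sub_distrib,
    Finset.sum_ite_eq', Finset.mem_univ, if_true]

end MonoidAlgebra

theorem coeff_cyclic_of_sum_commutator_eq_zero_general (s : ℕ)
    (P : Fin n → FreePoly K n)
    (h : ∑ j : Fin n, (Xvar K j * P j - P j * Xvar K j) = 0) :
    ∀ (i₀ : Fin n) (t : List (Fin n)), t.length = s →
      (P i₀).coeff (FreeMonoid.ofList t) =
        (P ((i₀ :: t).getLast (List.cons_ne_nil i₀ t))).coeff
          (FreeMonoid.ofList ((i₀ :: t).dropLast)) := by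
  intro i₀ t _
  simp only [Xvar, mono, FreeMonoid.ofList_singleton] at h
  have hcoeff := congrArg (MonoidAlgebra.coeff · (FreeMonoid.ofList (i₀ :: t))) h
  rw [FreeMonoid.ofList_cons, MonoidAlgebra.coeff_sum_commutator_of_eq P
    (FreeMonoid.of_mul_ofList_eq_ofList_dropLast_mul_of_getLast i₀ t)] at hcoeff
  exact sub_eq_zero.mp hcoeff

theorem coeff_cyclic_of_sum_commutator_eq_zero (s : ℕ) (hs : 1 ≤ s)
    (P : Fin n → FreePoly K n)
    (hhom : ∀ j : Fin n, P j ∈ Submodule.span K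
      {x : FreePoly K n | ∃ w : List (Fin n), w.length = s ∧ x = mono K w})
    (h : ∑ j : Fin n, (Xvar K j * P j - P j * Xvar K j) = 0) :
    ∀ (i₀ : Fin n) (t : List (Fin n)), t.length = s →
      (P i₀).coeff (FreeMonoid.ofList t) =
        (P ((i₀ :: t).getLast (List.cons_ne_nil i₀ t))).coeff
          (FreeMonoid.ofList ((i₀ :: t).dropLast)) :=
  coeff_cyclic_of_sum_commutator_eq_zero_general s P h
end
end
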